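/- arXiv:2103.08686 — 3 statements merged into one kernel-verified Lean document; each statement's English description precedes it below -/
import Mathlib

section
/- Let A be an abelian category in which every object has finite length ℓ, and let t ∈ K. Then δ(e) := t^{ℓ(ker e)} defines a degree function on A: δ(id) = 1, δ is invariant under pullback of epimorphisms, and δ(e∘e') = δ(e)δ(e') for composable epimorphisms. -/
open CategoryTheory CategoryTheory.Limits

universe v u

section Aux

variable {C : Type u} [Category.{v} C] [Abelian C]

/-- In a pullback square, the kernel of one projection is isomorphic to the kernel of the
opposite side. -/
noncomputable def kernelIsoOfIsPullback {P x y z : C} (p₁ : P ⟶ x) (p₂ : P ⟶ y)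
    (e : x ⟶ z) (g : y ⟶ z) (h : IsPullback p₁ p₂ e g) :
    (kernel p₂ : C) ≅ (kernel e : C) where
  hom := kernel.lift e (kernel.ι p₂ ≫ p₁) (by
    rw [Category.assoc, h.w, ← Category.assoc, kernel.condition, zero_comp])
  inv := kernel.lift p₂ (h.lift (kernel.ι e) 0 (by simp)) (h.lift_snd _ _ _)
  hom_inv_id := by
    ext
    rw [Category.assoc, kernel.lift_ι, Category.id_comp]
    apply h.hom_ext
    · rw [Category.assoc, h.lift_fst, kernel.lift_ι]
    · rw [Category.assoc, h.lift_snd, comp_zero, kernel.condition]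
  inv_hom_id := by
    ext
    rw [Category.assoc, kernel.lift_ι, ← Category.assoc, kernel.lift_ι, h.lift_fst,
      Category.id_comp]

/-- For composable morphisms with the first one epi, the kernels fit in a short exact
sequence `0 ⟶ ker e' ⟶ ker (e' ≫ e) ⟶ ker e ⟶ 0`. -/
theorem kernel_comp_shortExact {x y z : C} (e' : x ⟶ y) (e : y ⟶ z) (he' : Epi e') :
    ∃ S : ShortComplex C, S.ShortExact ∧ S.X₁ = (kernel e' : C) ∧
      S.X₂ = (kernel (e' ≫ e) : C) ∧ S.X₃ = (kernel e : C) := by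
  let f : (kernel e' : C) ⟶ kernel (e' ≫ e) :=
    kernel.lift _ (kernel.ι e') (by rw [← Category.assoc, kernel.condition, zero_comp])
  let g : (kernel (e' ≫ e) : C) ⟶ kernel e :=
    kernel.lift e (kernel.ι (e' ≫ e) ≫ e') (by rw [Category.assoc, kernel.condition])
  have hgι : g ≫ kernel.ι e = kernel.ι (e' ≫ e) ≫ e' := kernel.lift_ι _ _ _
  have hfι : f ≫ kernel.ι (e' ≫ e) = kernel.ι e' := kernel.lift_ι _ _ _
  have hzero : f ≫ g = 0 := by
    have : (f ≫ g) ≫ kernel.ι e = 0 := by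
      rw [Category.assoc, hgι, ← Category.assoc, hfι, kernel.condition]
    rwa [← cancel_mono (kernel.ι e), zero_comp]
  refine ⟨ShortComplex.mk f g hzero, ?_, rfl, rfl, rfl⟩
  -- f is a kernel of g
  have hker : IsLimit (KernelFork.ofι f hzero) := by
    refine KernelFork.IsLimit.ofι f hzero
      (fun {W} l hl => kernel.lift e' (l ≫ kernel.ι (e' ≫ e)) ?_) (fun {W} l hl => ?_)
      (fun {W} l hl m hm => ?_)
    · have : l ≫ kernel.ι (e' ≫ e) ≫ e' = 0 := by
        rw [← hgι, ← Category.assoc, hl, zero_comp]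
      rwa [Category.assoc]
    · rw [← cancel_mono (kernel.ι (e' ≫ e)), Category.assoc, hfι, kernel.lift_ι]
    · rw [← cancel_mono (kernel.ι (e' ≫ e)), Category.assoc, hfι] at hm
      rw [← cancel_mono (kernel.ι e'), kernel.lift_ι, hm]
  -- g is epi: it is the pullback of the epi e' along kernel.ι e
  have hpb : IsLimit (PullbackCone.mk (kernel.ι (e' ≫ e)) g hgι.symm) := by
    refine PullbackCone.IsLimit.mk hgι.symm
      (fun s => kernel.lift (e' ≫ e) s.fst ?_) (fun s => kernel.lift_ι _ _ _)
      (fun s => ?_) (fun s m h₁ h₂ => ?_)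
    · rw [← Category.assoc, s.condition, Category.assoc, kernel.condition, comp_zero]
    · rw [← cancel_mono (kernel.ι e), Category.assoc, hgι, ← Category.assoc, kernel.lift_ι,
        s.condition]
    · rw [← cancel_mono (kernel.ι (e' ≫ e)), kernel.lift_ι, h₁]
  have hepi : Epi g := Abelian.epi_snd_of_isLimit e' (kernel.ι e) hpb
  have hmono : Mono f := by
    have : Mono (f ≫ kernel.ι (e' ≫ e)) := by rw [hfι]; infer_instance
    exact mono_of_mono f (kernel.ι (e' ≫ e))
  exact { exact := ShortComplex.exact_of_f_is_kernel _ hker,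
          mono_f := hmono, epi_g := hepi }

end Aux

/-- Let `A` be an abelian category in which every object has a finite length `ℓ`
(`ℓ` vanishes exactly on zero objects, is invariant under isomorphism, and is additive on
short exact sequences), and let `t ∈ K`. Then `δ(e) := t ^ ℓ(ker e)` is a degree function:
`δ(id) = 1`, `δ` is invariant under pullback of epimorphisms, and
`δ(e' ≫ e) = δ(e') * δ(e)` for composable epimorphisms. -/
theorem length_kernel_degree_function
    {C : Type u} [Category.{v} C] [Abelian C]
    (ℓ : C → ℕ)
    (hzero : ∀ x : C, ℓ x = 0 ↔ IsZero x)
    (hiso : ∀ ⦃x y : C⦄, (x ≅ y) → ℓ x = ℓ y)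
    (hadd : ∀ S : CategoryTheory.ShortComplex C, S.ShortExact → ℓ S.X₂ = ℓ S.X₁ + ℓ S.X₃)
    {K : Type*} [CommRing K] (t : K) :
    (∀ x : C, t ^ ℓ ((kernel (𝟙 x) : C)) = 1) ∧
      (∀ ⦃P x y z : C⦄ (p₁ : P ⟶ x) (p₂ : P ⟶ y) (e : x ⟶ z) (g : y ⟶ z),
        Epi e → IsPullback p₁ p₂ e g → t ^ ℓ ((kernel p₂ : C)) = t ^ ℓ ((kernel e : C))) ∧
      (∀ ⦃x y z : C⦄ (e' : x ⟶ y) (e : y ⟶ z), Epi e' → Epi e →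
        t ^ ℓ ((kernel (e' ≫ e) : C)) = t ^ ℓ ((kernel e' : C)) * t ^ ℓ ((kernel e : C))) := by
  refine ⟨fun x => ?_, fun P x y z p₁ p₂ e g he hpb => ?_, fun x y z e' e he' he => ?_⟩
  · have : IsZero (kernel (𝟙 x) : C) := by
      rw [← hzero]
      exact (hzero _).mpr (by
        have : Mono (kernel.ι (𝟙 x) ≫ 𝟙 x) := by infer_instance
        have hm : Mono (kernel.ι (𝟙 x)) := inferInstance
        refine IsZero.of_mono_eq_zero (kernel.ι (𝟙 x)) ?_
        simpa using kernel.condition (𝟙 x))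
    rw [(hzero _).mpr this, pow_zero]
  · rw [hiso (kernelIsoOfIsPullback p₁ p₂ e g hpb)]
  · obtain ⟨S, hS, h₁, h₂, h₃⟩ := kernel_comp_shortExact e' e he'
    have := hadd S hS
    rw [h₁, h₂, h₃] at this
    rw [this, pow_add]
end

section
/- In the opposite of the category of finite sets (equivalently, by duality, in finite sets): for every finite set X, every reflexive relation R ⊆ X × X on a quotient-side interpretation satisfies the Mal'tsev property. Concretely: the category FinSet^op is a Mal'tsev category, i.e., every subobject r ⊆ x × x in FinSet^op containing the diagonal is an equivalence relation. -/
open CategoryTheory CategoryTheory.Limits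

/-- The composition `s ∘ r` of relations, in a category with finite limits and images. -/
noncomputable def relComp {C : Type*} [Category C] [HasFiniteLimits C] [HasImages C]
    {x y z : C} (r : Subobject (x ⨯ y)) (s : Subobject (y ⨯ z)) :
    Subobject (x ⨯ z) :=
  Subobject.mk (image.ι (prod.lift
    (pullback.fst (r.arrow ≫ prod.snd) (s.arrow ≫ prod.fst) ≫ r.arrow ≫ prod.fst)
    (pullback.snd (r.arrow ≫ prod.snd) (s.arrow ≫ prod.fst) ≫ s.arrow ≫ prod.snd)))

/-- The opposite relation `r∨` of a relation `r ⊆ x × y`. -/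
noncomputable def oppRel {C : Type*} [Category C] [HasFiniteLimits C] [HasImages C]
    {x y : C} (r : Subobject (x ⨯ y)) : Subobject (y ⨯ x) :=
  Subobject.mk (r.arrow ≫ (prod.braiding x y).hom)

namespace FinsetopMaltsevAux

universe u

/-- Epimorphisms in `FintypeCat` are surjective. -/
lemma epi_surj {X Y : FintypeCat.{u}} (f : X ⟶ Y) [Epi f] : Function.Surjective f := by
  classical
  by_contra h
  rw [Function.Surjective] at h
  push_neg at h
  obtain ⟨y, hy⟩ := h
  let g : Y ⟶ FintypeCat.of (ULift.{u} Bool) := FintypeCat.homMk fun _ => ULift.up true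
  let g' : Y ⟶ FintypeCat.of (ULift.{u} Bool) :=
    FintypeCat.homMk fun z => ULift.up (decide (∃ a, f a = z))
  have hc : f ≫ g = f ≫ g' := by
    apply FintypeCat.hom_ext; intro a
    show ULift.up true = ULift.up (decide (∃ a', f a' = f a))
    have : (∃ a', f a' = f a) := ⟨a, rfl⟩
    simp [this]
  have hgg : g = g' := (cancel_epi f).mp hc
  have h2 : ULift.up true = ULift.up (decide (∃ a, f a = y)) := ConcreteCategory.congr_hom hgg y
  have h3 : (∃ a, f a = y) := by
    have := congrArg ULift.down h2
    exact of_decide_eq_true this.symm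
  obtain ⟨a, ha⟩ := h3
  exact hy a ha

/-- Monomorphisms in `FintypeCat` are injective. -/
lemma mono_inj {X Y : FintypeCat.{u}} (f : X ⟶ Y) [Mono f] : Function.Injective f := by
  intro a b hab
  let g : FintypeCat.of (ULift.{u} PUnit) ⟶ X := FintypeCat.homMk fun _ => a
  let g' : FintypeCat.of (ULift.{u} PUnit) ⟶ X := FintypeCat.homMk fun _ => b
  have hc : g ≫ f = g' ≫ f := by
    apply FintypeCat.hom_ext; intro u
    exact hab
  exact ConcreteCategory.congr_hom ((cancel_mono f).mp hc) (ULift.up PUnit.unit)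

/-- Two monomorphisms in `FintypeCatᵒᵖ` into the same object whose unops (which are
surjections) have the same fibers determine the same subobject. -/
lemma mk_eq_mk_of_fibers {Z A B : FintypeCat.{u}ᵒᵖ}
    (m₁ : A ⟶ Z) (m₂ : B ⟶ Z) [Mono m₁] [Mono m₂]
    (h : ∀ u v : Z.unop, m₁.unop u = m₁.unop v ↔ m₂.unop u = m₂.unop v) :
    Subobject.mk m₁ = Subobject.mk m₂ := by
  have h₁ : Function.Surjective m₁.unop := epi_surj m₁.unop
  have h₂ : Function.Surjective m₂.unop := epi_surj m₂.unop
  apply le_antisymm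
  · let φu : B.unop ⟶ A.unop := FintypeCat.homMk fun b => m₁.unop (Function.surjInv h₂ b)
    refine Subobject.mk_le_mk_of_comm φu.op ?_
    apply Quiver.Hom.unop_inj
    apply FintypeCat.hom_ext; intro u
    show φu (m₂.unop u) = m₁.unop u
    have : m₂.unop (Function.surjInv h₂ (m₂.unop u)) = m₂.unop u :=
      Function.surjInv_eq h₂ (m₂.unop u)
    exact (h _ _).mpr this
  · let φu : A.unop ⟶ B.unop := FintypeCat.homMk fun b => m₂.unop (Function.surjInv h₁ b)
    refine Subobject.mk_le_mk_of_comm φu.op ?_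
    apply Quiver.Hom.unop_inj
    apply FintypeCat.hom_ext; intro u
    show φu (m₁.unop u) = m₂.unop u
    have : m₁.unop (Function.surjInv h₁ (m₁.unop u)) = m₁.unop u :=
      Function.surjInv_eq h₁ (m₁.unop u)
    exact (h _ _).mp this

end FinsetopMaltsevAux

open FinsetopMaltsevAux in
/-- `FinSet^op` is a Mal'tsev category: every subobject `r ⊆ x × x` containing the diagonal
is an (internal) equivalence relation, i.e. `r` is symmetric (`r∨ = r`) and transitive
(`r ∘ r = r`). -/
theorem finsetop_maltsev
    [HasFiniteLimits FintypeCatᵒᵖ] [HasImages FintypeCatᵒᵖ]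
    (x : FintypeCatᵒᵖ) (r : Subobject (x ⨯ x))
    (hrefl : Subobject.mk (prod.lift (𝟙 x) (𝟙 x)) ≤ r) :
    oppRel r = r ∧ relComp r r = r := by
  classical
  let X : FintypeCat := x.unop
  let P : FintypeCat := (x ⨯ x).unop
  let ι₀ : X ⟶ P := (prod.fst : x ⨯ x ⟶ x).unop
  let ι₁ : X ⟶ P := (prod.snd : x ⨯ x ⟶ x).unop
  let R : FintypeCat := ((r : FintypeCatᵒᵖ)).unop
  let q : P ⟶ R := r.arrow.unop
  have hq : Function.Surjective q := epi_surj r.arrow.unop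
  let i₀ : X ⟶ R := ι₀ ≫ q
  let i₁ : X ⟶ R := ι₁ ≫ q
  -- jointly epi
  have hfan : ∀ {T : FintypeCat} (f g : P ⟶ T),
      ι₀ ≫ f = ι₀ ≫ g → ι₁ ≫ f = ι₁ ≫ g → f = g := by
    intro T f g h0 h1
    have : f.op = g.op := by
      apply Limits.prod.hom_ext
      · exact Quiver.Hom.unop_inj h0
      · exact Quiver.Hom.unop_inj h1
    exact Quiver.Hom.op_inj this
  -- joint surjectivity
  have hjoint : ∀ w : P, (∃ a, ι₀ a = w) ∨ (∃ a, ι₁ a = w) := by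
    intro w
    by_contra hw
    push_neg at hw
    let g : P ⟶ FintypeCat.of (ULift Bool) :=
      FintypeCat.homMk fun z => ULift.up (decide ((∃ a, ι₀ a = z) ∨ (∃ a, ι₁ a = z)))
    let g' : P ⟶ FintypeCat.of (ULift Bool) := FintypeCat.homMk fun _ => ULift.up true
    have hg : g = g' := by
      apply hfan
      · apply FintypeCat.hom_ext; intro a
        show ULift.up (decide ((∃ a', ι₀ a' = ι₀ a) ∨ (∃ a', ι₁ a' = ι₀ a)))
          = ULift.up true
        have : (∃ a', ι₀ a' = ι₀ a) ∨ (∃ a', ι₁ a' = ι₀ a) := Or.inl ⟨a, rfl⟩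
        simp [this]
      · apply FintypeCat.hom_ext; intro a
        show ULift.up (decide ((∃ a', ι₀ a' = ι₁ a) ∨ (∃ a', ι₁ a' = ι₁ a)))
          = ULift.up true
        have : (∃ a', ι₀ a' = ι₁ a) ∨ (∃ a', ι₁ a' = ι₁ a) := Or.inr ⟨a, rfl⟩
        simp [this]
    have h2 : ULift.up (decide ((∃ a, ι₀ a = w) ∨ (∃ a, ι₁ a = w)))
        = ULift.up (true : Bool) := ConcreteCategory.congr_hom hg w
    have h3 := of_decide_eq_true (congrArg ULift.down h2)
    rcases h3 with ⟨a, ha⟩ | ⟨a, ha⟩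
    · exact hw.1 a ha
    · exact hw.2 a ha
  -- the retraction coming from reflexivity
  let u : x ⟶ (r : FintypeCatᵒᵖ) := Subobject.ofMkLE (prod.lift (𝟙 x) (𝟙 x)) r hrefl
  have hu : u ≫ r.arrow = prod.lift (𝟙 x) (𝟙 x) := Subobject.ofMkLE_arrow hrefl
  let p : R ⟶ X := u.unop
  have hqp : q ≫ p = (prod.lift (𝟙 x) (𝟙 x)).unop := congrArg Quiver.Hom.unop hu
  have hδ0 : ι₀ ≫ (prod.lift (𝟙 x) (𝟙 x)).unop = 𝟙 X :=
    congrArg Quiver.Hom.unop (prod.lift_fst (𝟙 x) (𝟙 x))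
  have hδ1 : ι₁ ≫ (prod.lift (𝟙 x) (𝟙 x)).unop = 𝟙 X :=
    congrArg Quiver.Hom.unop (prod.lift_snd (𝟙 x) (𝟙 x))
  have hpi₀ : ∀ a : X, p (i₀ a) = a := by
    intro a
    have h1 : ι₀ ≫ q ≫ p = 𝟙 X := by rw [hqp, hδ0]
    exact ConcreteCategory.congr_hom h1 a
  have hpi₁ : ∀ a : X, p (i₁ a) = a := by
    intro a
    have h1 : ι₁ ≫ q ≫ p = 𝟙 X := by rw [hqp, hδ1]
    exact ConcreteCategory.congr_hom h1 a
  -- injectivity consequences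
  have h00 : ∀ a b : X, i₀ a = i₀ b → a = b := by
    intro a b hab
    have := congrArg p hab
    rwa [hpi₀, hpi₀] at this
  have h11 : ∀ a b : X, i₁ a = i₁ b → a = b := by
    intro a b hab
    have := congrArg p hab
    rwa [hpi₁, hpi₁] at this
  have h01 : ∀ a b : X, i₀ a = i₁ b → a = b := by
    intro a b hab
    have := congrArg p hab
    rwa [hpi₀, hpi₁] at this
  have hq0 : ∀ a : X, q (ι₀ a) = i₀ a := fun _ => rfl
  have hq1 : ∀ a : X, q (ι₁ a) = i₁ a := fun _ => rfl
  -- classification of fibers of q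
  have hclass : ∀ w w' : P, q w = q w' ↔
      (w = w' ∨ ∃ a, i₀ a = i₁ a ∧
        ((w = ι₀ a ∧ w' = ι₁ a) ∨ (w = ι₁ a ∧ w' = ι₀ a))) := by
    intro w w'
    constructor
    · intro hww
      rcases hjoint w with ⟨a, ha⟩ | ⟨a, ha⟩ <;> rcases hjoint w' with ⟨b, hb⟩ | ⟨b, hb⟩
      · left
        have : i₀ a = i₀ b := by rw [← hq0, ← hq0, ha, hb, hww]
        rw [← ha, ← hb, h00 a b this]
      · have hab : i₀ a = i₁ b := by rw [← hq0, ← hq1, ha, hb, hww]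
        have hab' := h01 a b hab
        subst hab'
        exact Or.inr ⟨a, hab, Or.inl ⟨ha.symm, hb.symm⟩⟩
      · have hab : i₀ b = i₁ a := by rw [← hq0, ← hq1, hb, ha, hww.symm]
        have hab' := h01 b a hab
        subst hab'
        exact Or.inr ⟨b, hab, Or.inr ⟨ha.symm, hb.symm⟩⟩
      · left
        have : i₁ a = i₁ b := by rw [← hq1, ← hq1, ha, hb, hww]
        rw [← ha, ← hb, h11 a b this]
    · rintro (rfl | ⟨a, haa, ⟨rfl, rfl⟩ | ⟨rfl, rfl⟩⟩)
      · rfl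
      · rw [hq0, hq1]; exact haa
      · rw [hq0, hq1]; exact haa.symm
  -- symmetry
  have hsymm : oppRel r = r := by
    let b : P ⟶ P := (prod.braiding x x).hom.unop
    have hbf : (prod.braiding x x).hom ≫ (prod.fst : x ⨯ x ⟶ x) = prod.snd := by
      simp [prod.braiding]
      exact prod.lift_fst _ _
    have hbs : (prod.braiding x x).hom ≫ (prod.snd : x ⨯ x ⟶ x) = prod.fst := by
      simp [prod.braiding]
      exact prod.lift_snd _ _
    have hb0 : ∀ a : X, b (ι₀ a) = ι₁ a := by
      intro a
      have h1 : ι₀ ≫ b = ι₁ := congrArg Quiver.Hom.unop hbf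
      exact ConcreteCategory.congr_hom h1 a
    have hb1 : ∀ a : X, b (ι₁ a) = ι₀ a := by
      intro a
      have h1 : ι₁ ≫ b = ι₀ := congrArg Quiver.Hom.unop hbs
      exact ConcreteCategory.congr_hom h1 a
    have hbb : ∀ w : P, b (b w) = w := by
      intro w
      have h1 : b ≫ b = 𝟙 P := congrArg Quiver.Hom.unop (prod.symmetry x x)
      exact ConcreteCategory.congr_hom h1 w
    have hmono : ∀ w w', q w = q w' → q (b w) = q (b w') := by
      intro w w' hww
      rcases (hclass w w').mp hww with rfl | ⟨a, haa, ⟨rfl, rfl⟩ | ⟨rfl, rfl⟩⟩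
      · rfl
      · rw [hb0, hb1, hq0, hq1]; exact haa.symm
      · rw [hb0, hb1, hq0, hq1]; exact haa
    have key : ∀ w w' : P,
        (r.arrow ≫ (prod.braiding x x).hom).unop w =
          (r.arrow ≫ (prod.braiding x x).hom).unop w' ↔ q w = q w' := by
      intro w w'
      have he : ∀ w : P, (r.arrow ≫ (prod.braiding x x).hom).unop w = q (b w) :=
        fun _ => rfl
      rw [he, he]
      constructor
      · intro hww'
        have := hmono _ _ hww'
        rwa [hbb, hbb] at this
      · exact hmono w w'
    rw [oppRel]
    conv_rhs => rw [← Subobject.mk_arrow r]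
    exact mk_eq_mk_of_fibers _ _ key
  refine ⟨hsymm, ?_⟩
  -- transitivity
  let pb := pullback (r.arrow ≫ (prod.snd : x ⨯ x ⟶ x)) (r.arrow ≫ (prod.fst : x ⨯ x ⟶ x))
  let k₀ : R ⟶ pb.unop := (pullback.fst (r.arrow ≫ prod.snd) (r.arrow ≫ prod.fst)).unop
  let k₁ : R ⟶ pb.unop := (pullback.snd (r.arrow ≫ prod.snd) (r.arrow ≫ prod.fst)).unop
  let g : pb ⟶ x ⨯ x := prod.lift
    (pullback.fst (r.arrow ≫ prod.snd) (r.arrow ≫ prod.fst) ≫ r.arrow ≫ prod.fst)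
    (pullback.snd (r.arrow ≫ prod.snd) (r.arrow ≫ prod.fst) ≫ r.arrow ≫ prod.snd)
  have hg0 : ∀ a : X, g.unop (ι₀ a) = k₀ (i₀ a) := fun a =>
    ConcreteCategory.congr_hom (congrArg Quiver.Hom.unop (prod.lift_fst
      (pullback.fst (r.arrow ≫ prod.snd) (r.arrow ≫ prod.fst) ≫ r.arrow ≫ prod.fst)
      (pullback.snd (r.arrow ≫ prod.snd) (r.arrow ≫ prod.fst) ≫ r.arrow ≫ prod.snd))) a
  have hg1 : ∀ a : X, g.unop (ι₁ a) = k₁ (i₁ a) := fun a =>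
    ConcreteCategory.congr_hom (congrArg Quiver.Hom.unop (prod.lift_snd
      (pullback.fst (r.arrow ≫ prod.snd) (r.arrow ≫ prod.fst) ≫ r.arrow ≫ prod.fst)
      (pullback.snd (r.arrow ≫ prod.snd) (r.arrow ≫ prod.fst) ≫ r.arrow ≫ prod.snd))) a
  have hcond : ∀ a : X, k₀ (i₁ a) = k₁ (i₀ a) := fun a =>
    ConcreteCategory.congr_hom (congrArg Quiver.Hom.unop
      (pullback.condition (f := r.arrow ≫ (prod.snd : x ⨯ x ⟶ x))
        (g := r.arrow ≫ (prod.fst : x ⨯ x ⟶ x)))) a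
  -- test cocone 1
  let T : FintypeCat := FintypeCat.of (R ⊕ R)
  let h : R ⟶ T := FintypeCat.homMk fun z => Sum.inl z
  let h' : R ⟶ T := FintypeCat.homMk fun w =>
    if hw : ∃ a, i₀ a = w then Sum.inl (i₁ (Classical.choose hw)) else Sum.inr w
  have hcomm : i₁ ≫ h = i₀ ≫ h' := by
    apply FintypeCat.hom_ext; intro a
    show Sum.inl (i₁ a) = h' (i₀ a)
    have hw : ∃ a', i₀ a' = i₀ a := ⟨a, rfl⟩
    have hdef : h' (i₀ a) = Sum.inl (i₁ (Classical.choose hw)) := dif_pos hw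
    rw [hdef, h00 _ _ (Classical.choose_spec hw)]
  let dlift := pullback.lift (f := r.arrow ≫ (prod.snd : x ⨯ x ⟶ x))
    (g := r.arrow ≫ (prod.fst : x ⨯ x ⟶ x)) h.op h'.op
    (Quiver.Hom.unop_inj hcomm)
  let d : pb.unop ⟶ T := dlift.unop
  have hd0 : ∀ z : R, d (k₀ z) = h z := fun z =>
    ConcreteCategory.congr_hom (congrArg Quiver.Hom.unop
      (pullback.lift_fst (f := r.arrow ≫ (prod.snd : x ⨯ x ⟶ x))
        (g := r.arrow ≫ (prod.fst : x ⨯ x ⟶ x)) h.op h'.op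
        (Quiver.Hom.unop_inj hcomm))) z
  have hd1 : ∀ z : R, d (k₁ z) = h' z := fun z =>
    ConcreteCategory.congr_hom (congrArg Quiver.Hom.unop
      (pullback.lift_snd (f := r.arrow ≫ (prod.snd : x ⨯ x ⟶ x))
        (g := r.arrow ≫ (prod.fst : x ⨯ x ⟶ x)) h.op h'.op
        (Quiver.Hom.unop_inj hcomm))) z
  -- test cocone 2
  let h₂ : R ⟶ T := FintypeCat.homMk fun z =>
    if hz : ∃ a, i₁ a = z then Sum.inl (i₀ (Classical.choose hz)) else Sum.inr z
  let h₂' : R ⟶ T := FintypeCat.homMk fun z => Sum.inl z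
  have hcomm₂ : i₁ ≫ h₂ = i₀ ≫ h₂' := by
    apply FintypeCat.hom_ext; intro a
    show h₂ (i₁ a) = Sum.inl (i₀ a)
    have hz : ∃ a', i₁ a' = i₁ a := ⟨a, rfl⟩
    have hdef : h₂ (i₁ a) = Sum.inl (i₀ (Classical.choose hz)) := dif_pos hz
    rw [hdef, h11 _ _ (Classical.choose_spec hz)]
  let dlift₂ := pullback.lift (f := r.arrow ≫ (prod.snd : x ⨯ x ⟶ x))
    (g := r.arrow ≫ (prod.fst : x ⨯ x ⟶ x)) h₂.op h₂'.op
    (Quiver.Hom.unop_inj hcomm₂)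
  let d₂ : pb.unop ⟶ T := dlift₂.unop
  have hd₂1 : ∀ z : R, d₂ (k₁ z) = h₂' z := fun z =>
    ConcreteCategory.congr_hom (congrArg Quiver.Hom.unop
      (pullback.lift_snd (f := r.arrow ≫ (prod.snd : x ⨯ x ⟶ x))
        (g := r.arrow ≫ (prod.fst : x ⨯ x ⟶ x)) h₂.op h₂'.op
        (Quiver.Hom.unop_inj hcomm₂))) z
  -- injectivity of k₀, k₁ and the mixed fiber description
  have hk0inj : ∀ z z' : R, k₀ z = k₀ z' → z = z' := by
    intro z z' hzz
    have := congrArg d hzz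
    rw [hd0, hd0] at this
    exact Sum.inl.inj this
  have hk1inj : ∀ z z' : R, k₁ z = k₁ z' → z = z' := by
    intro z z' hzz
    have := congrArg d₂ hzz
    rw [hd₂1, hd₂1] at this
    exact Sum.inl.inj this
  have hmix : ∀ z w : R, k₀ z = k₁ w → ∃ a, z = i₁ a ∧ w = i₀ a := by
    intro z w hzw
    have hthis := congrArg d hzw
    rw [hd0, hd1] at hthis
    by_cases hw : ∃ a, i₀ a = w
    · have hdef : h' w = Sum.inl (i₁ (Classical.choose hw)) := dif_pos hw
      rw [hdef] at hthis
      have hz : z = i₁ (Classical.choose hw) := Sum.inl.inj hthis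
      exact ⟨Classical.choose hw, hz, (Classical.choose_spec hw).symm⟩
    · have hdef : h' w = Sum.inr w := dif_neg hw
      rw [hdef] at hthis
      exact absurd hthis (fun hh => Sum.inl_ne_inr hh)
  -- fibers of g.unop agree with fibers of q
  have hgfibers : ∀ w w' : P, g.unop w = g.unop w' ↔ q w = q w' := by
    intro w w'
    constructor
    · intro hww
      rcases hjoint w with ⟨a, ha⟩ | ⟨a, ha⟩ <;> rcases hjoint w' with ⟨c, hc⟩ | ⟨c, hc⟩
      · subst ha; subst hc
        rw [hg0, hg0] at hww
        rw [hq0, hq0]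
        exact hk0inj _ _ hww
      · subst ha; subst hc
        rw [hg0, hg1] at hww
        obtain ⟨e, he1, he2⟩ := hmix _ _ hww
        have hec : e = c := h01 _ _ he2.symm
        rw [hq0, hq1, ← hec]
        exact he1
      · subst ha; subst hc
        rw [hg1, hg0] at hww
        obtain ⟨e, he1, he2⟩ := hmix _ _ hww.symm
        have hce : c = e := h01 _ _ he1
        rw [hq1, hq0, hce]
        exact he2
      · subst ha; subst hc
        rw [hg1, hg1] at hww
        rw [hq1, hq1]
        exact hk1inj _ _ hww
    · intro hww
      rcases (hclass w w').mp hww with rfl | ⟨a, haa, ⟨rfl, rfl⟩ | ⟨rfl, rfl⟩⟩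
      · rfl
      · rw [hg0, hg1, haa, hcond, ← haa]
      · rw [hg1, hg0, haa, hcond, ← haa]
  -- transfer through the image factorisation
  have hinj : Function.Injective (factorThruImage g).unop :=
    mono_inj (factorThruImage g).unop
  have himg : ∀ w : P, (factorThruImage g).unop ((image.ι g).unop w) = g.unop w := by
    intro w
    have h1 : (image.ι g).unop ≫ (factorThruImage g).unop = g.unop :=
      congrArg Quiver.Hom.unop (image.fac g)
    exact ConcreteCategory.congr_hom h1 w
  have key : ∀ w w' : P,
      (image.ι g).unop w = (image.ι g).unop w' ↔ q w = q w' := by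
    intro w w'
    rw [← hgfibers]
    constructor
    · intro hww
      rw [← himg, ← himg, hww]
    · intro hww
      apply hinj
      rw [himg, himg, hww]
  rw [relComp]
  conv_rhs => rw [← Subobject.mk_arrow r]
  exact mk_eq_mk_of_fibers _ _ key
end

section
/- Let A be a finite lattice and let q_u (u ∈ A) be a family of commuting idempotents in a K-algebra E with q_u q_v = q_{u ∧ v} for all u, v, and such that the q_u are linearly independent over K. Define q_v* := Σ_{u ≤ v} μ(u,v) q_u. Then the q_v* are pairwise orthogonal nonzero idempotents with Σ_{u ≤ v} q_u* = q_v for all v; in particular if A has a top element ⊤ then Σ_{u ∈ A} q_u* = q_⊤. -/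
/-!
Möbius inversion gives `q_v = ∑_{u ≤ v} q_u*`, i.e. `q_v* = q_v - ∑_{u < v} q_u*`. Multiplying by
`q_t` and using `q_t q_v = q_{t ⊓ v}`, strong induction on `v` shows that `q_t q_v* = q_v*` if
`v ≤ t` and `0` otherwise. Expanding `q_u* = ∑_w μ(w,u) q_w` then gives
`q_u* q_v* = (∑_{v ≤ w} μ(w,u)) q_v* = δ_{uv} q_v*`. Finally `q_u* ≠ 0` because its coefficient
at `q_u` is `μ(u,u) = 1`.
-/

open Finset

section PartialOrder

variable {A : Type*} [PartialOrder A] [Fintype A] [DecidableRel ((· ≤ ·) : A → A → Prop)]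

structure IsMobius (μ : A → A → ℤ) : Prop where
  apply_self : ∀ u, μ u u = 1
  eq_zero_of_not_le : ∀ u w, ¬ u ≤ w → μ u w = 0
  sum_Icc_eq_zero : ∀ u w, u < w → ∑ v ∈ univ.filter (fun v => u ≤ v ∧ v ≤ w), μ v w = 0

def mobiusInversion {M : Type*} [AddCommGroup M] (μ : A → A → ℤ) (f : A → M) (v : A) : M :=
  ∑ u ∈ univ.filter (· ≤ v), μ u v • f u

namespace IsMobius

variable {μ : A → A → ℤ}

theorem sum_filter_le_smul (hμ : IsMobius μ) {M : Type*} [AddCommGroup M] (f : A → M) (u : A) :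
    ∑ w ∈ univ.filter (· ≤ u), μ w u • f w = ∑ w, μ w u • f w :=
  sum_filter_of_ne fun w _ h =>
    by_contra fun hw => h (by rw [hμ.eq_zero_of_not_le w u hw, zero_smul])

theorem sum_filter_ge [DecidableEq A] (hμ : IsMobius μ) (t u : A) :
    ∑ w ∈ univ.filter (t ≤ ·), μ w u = if t = u then 1 else 0 := by
  rw [← sum_filter_of_ne (p := (· ≤ u))
    fun w _ h => by_contra fun hw => h (hμ.eq_zero_of_not_le w u hw), filter_filter]
  split_ifs with htu
  · subst htu
    rw [filter_congr fun w _ => le_antisymm_iff.symm.trans eq_comm, filter_eq' univ t]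
    simp [hμ.apply_self]
  · by_cases hle : t ≤ u
    · exact hμ.sum_Icc_eq_zero t u (lt_of_le_of_ne hle htu)
    · exact sum_eq_zero fun w hw => absurd ((mem_filter.1 hw).2.1.trans (mem_filter.1 hw).2.2) hle

theorem zeta_mul_eq_one [DecidableEq A] (hμ : IsMobius μ) :
    (Matrix.of fun u v : A => if u ≤ v then (1 : ℤ) else 0) * Matrix.of μ = 1 := by
  ext t u
  rw [Matrix.mul_apply, Matrix.one_apply, ← hμ.sum_filter_ge, sum_filter]
  simp only [Matrix.of_apply, ite_mul, one_mul, zero_mul]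

-- A one-sided inverse of a square matrix is two-sided, so `μ ζ = 1` as well.
theorem sum_filter_le [DecidableEq A] (hμ : IsMobius μ) (w v : A) :
    ∑ u ∈ univ.filter (· ≤ v), μ w u = if w = v then 1 else 0 := by
  have hMZ : Matrix.of μ * (Matrix.of fun u v : A => if u ≤ v then (1 : ℤ) else 0) = 1 :=
    mul_eq_one_comm.mp hμ.zeta_mul_eq_one
  have := congrFun (congrFun hMZ w) v
  rw [Matrix.mul_apply, Matrix.one_apply] at this
  rw [← this, sum_filter]
  simp only [Matrix.of_apply, mul_ite, mul_one, mul_zero]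

theorem sum_mobiusInversion (hμ : IsMobius μ) {M : Type*} [AddCommGroup M] (f : A → M) (v : A) :
    ∑ u ∈ univ.filter (· ≤ v), mobiusInversion μ f u = f v := by
  classical
  calc ∑ u ∈ univ.filter (· ≤ v), mobiusInversion μ f u
      = ∑ u ∈ univ.filter (· ≤ v), ∑ w, μ w u • f w := by
        simp only [mobiusInversion, hμ.sum_filter_le_smul]
    _ = ∑ w, (∑ u ∈ univ.filter (· ≤ v), μ w u) • f w := by
        rw [sum_comm]; simp only [sum_smul]
    _ = f v := by
        simp only [hμ.sum_filter_le, ite_smul, one_smul, zero_smul, sum_ite_eq', mem_univ,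
          if_true]

theorem mobiusInversion_ne_zero (hμ : IsMobius μ) {K E : Type*} [Ring K] [Nontrivial K]
    [AddCommGroup E] [Module K E] {q : A → E} (hind : LinearIndependent K q) (u : A) :
    mobiusInversion μ q u ≠ 0 := by
  intro h
  have hcomb : ∑ w, (μ w u : K) • q w = 0 := by
    simpa only [mobiusInversion, hμ.sum_filter_le_smul, Int.cast_smul_eq_zsmul] using h
  have := Fintype.linearIndependent_iff.mp hind _ hcomb u
  simp [hμ.apply_self] at this

end IsMobius

end PartialOrder

section SemilatticeInf

variable {A : Type*} [SemilatticeInf A] [Fintype A] [DecidableRel ((· ≤ ·) : A → A → Prop)]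
  {E : Type*} [Ring E] {μ : A → A → ℤ} {q : A → E}

theorem IsMobius.mul_mobiusInversion (hμ : IsMobius μ) (hq : ∀ u v, q u * q v = q (u ⊓ v))
    (t v : A) :
    q t * mobiusInversion μ q v = if v ≤ t then mobiusInversion μ q v else 0 := by
  classical
  induction v using WellFoundedLT.induction generalizing t with
  | ind v ih =>
  set below := (univ.filter (· ≤ v)).erase v
  have hsplit : ∀ f : A → E, ∑ u ∈ univ.filter (· ≤ v), f u = f v + ∑ u ∈ below, f u :=
    fun f => (add_sum_erase (univ.filter (· ≤ v)) f (mem_filter.2 ⟨mem_univ v, le_rfl⟩)).symm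
  have hv : mobiusInversion μ q v = q v - ∑ u ∈ below, mobiusInversion μ q u := by
    rw [← hμ.sum_mobiusInversion q v, hsplit, add_sub_cancel_right]
  have hlow : q t * ∑ u ∈ below, mobiusInversion μ q u =
      ∑ u ∈ below.filter (· ≤ t), mobiusInversion μ q u := by
    rw [mul_sum, sum_filter]
    refine sum_congr rfl fun u hu => ih u ?_ t
    obtain ⟨hne, hu⟩ := mem_erase.1 hu
    exact lt_of_le_of_ne (mem_filter.1 hu).2 hne
  have hexp : q t * mobiusInversion μ q v = ∑ u ∈ univ.filter (· ≤ t ⊓ v), mobiusInversion μ q u -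
      ∑ u ∈ below.filter (· ≤ t), mobiusInversion μ q u := by
    rw [hv, mul_sub, hq, hlow, hμ.sum_mobiusInversion]
  rw [hexp]
  split_ifs with hvt
  · have hbelow : below.filter (· ≤ t) = below :=
      filter_true_of_mem fun u hu => (mem_filter.1 (mem_of_mem_erase hu)).2.trans hvt
    rw [inf_eq_right.2 hvt, hbelow, hsplit, add_sub_cancel_right]
  · rw [sub_eq_zero]
    refine sum_congr ?_ fun _ _ => rfl
    ext u
    simp only [below, mem_filter, mem_erase, mem_univ, true_and, le_inf_iff]
    exact ⟨fun ⟨ht, hv⟩ => ⟨⟨fun h => hvt (h ▸ ht), hv⟩, ht⟩, fun ⟨⟨_, hv⟩, ht⟩ => ⟨ht, hv⟩⟩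

theorem IsMobius.mobiusInversion_mul_mobiusInversion [DecidableEq A] (hμ : IsMobius μ)
    (hq : ∀ u v, q u * q v = q (u ⊓ v)) (u v : A) :
    mobiusInversion μ q u * mobiusInversion μ q v = if u = v then mobiusInversion μ q u else 0 := by
  calc mobiusInversion μ q u * mobiusInversion μ q v
      = ∑ w, μ w u • (q w * mobiusInversion μ q v) := by
        rw [mobiusInversion, sum_mul, ← hμ.sum_filter_le_smul]
        simp only [smul_mul_assoc]
    _ = (∑ w ∈ univ.filter (v ≤ ·), μ w u) • mobiusInversion μ q v := by
        simp only [hμ.mul_mobiusInversion hq, smul_ite, smul_zero, sum_filter, sum_smul, ite_smul,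
          zero_smul]
    _ = if u = v then mobiusInversion μ q u else 0 := by
        rw [hμ.sum_filter_ge]
        rcases eq_or_ne u v with rfl | huv
        · simp
        · simp [huv, huv.symm]

end SemilatticeInf

theorem qStar_orthogonal_idempotents_general
    {K : Type*} [Field K] {E : Type*} [Ring E] [Algebra K E]
    {A : Type*} [Lattice A] [Fintype A]
    [DecidableRel ((· ≤ ·) : A → A → Prop)]
    (q : A → E)
    (hq : ∀ u v : A, q u * q v = q (u ⊓ v))
    (hind : LinearIndependent K q)
    (μ : A → A → ℤ)
    (hrefl : ∀ u : A, μ u u = 1)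
    (hzero : ∀ u w : A, ¬ u ≤ w → μ u w = 0)
    (hrec : ∀ u w : A, u < w →
      (∑ v ∈ Finset.univ.filter (fun v => u ≤ v ∧ v ≤ w), μ v w) = 0) :
    (∀ u : A, (∑ w ∈ Finset.univ.filter (· ≤ u), ((μ w u : ℤ) : K) • q w) *
        (∑ w ∈ Finset.univ.filter (· ≤ u), ((μ w u : ℤ) : K) • q w) =
        (∑ w ∈ Finset.univ.filter (· ≤ u), ((μ w u : ℤ) : K) • q w)) ∧
    (∀ u v : A, u ≠ v →
      (∑ w ∈ Finset.univ.filter (· ≤ u), ((μ w u : ℤ) : K) • q w) *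
        (∑ w ∈ Finset.univ.filter (· ≤ v), ((μ w v : ℤ) : K) • q w) = 0) ∧
    (∀ u : A, (∑ w ∈ Finset.univ.filter (· ≤ u), ((μ w u : ℤ) : K) • q w) ≠ 0) ∧
    (∀ v : A, (∑ u ∈ Finset.univ.filter (· ≤ v),
        ∑ w ∈ Finset.univ.filter (· ≤ u), ((μ w u : ℤ) : K) • q w) = q v) ∧
    (∀ m : A, IsTop m →
      (∑ u : A, ∑ w ∈ Finset.univ.filter (· ≤ u), ((μ w u : ℤ) : K) • q w) = q m) := by
  classical
  have hμ : IsMobius μ := ⟨hrefl, hzero, hrec⟩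
  have hstar : ∀ u, ∑ w ∈ univ.filter (· ≤ u), ((μ w u : ℤ) : K) • q w = mobiusInversion μ q u :=
    fun u => by simp only [Int.cast_smul_eq_zsmul, mobiusInversion]
  simp only [hstar]
  refine ⟨fun u => ?_, fun u v huv => ?_, hμ.mobiusInversion_ne_zero hind,
    hμ.sum_mobiusInversion q, fun m hm => ?_⟩
  · simpa using hμ.mobiusInversion_mul_mobiusInversion hq u u
  · simpa [huv] using hμ.mobiusInversion_mul_mobiusInversion hq u v
  · rw [← hμ.sum_mobiusInversion q m, filter_true_of_mem fun u _ => hm u]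

/-- Let `A` be a finite lattice and `(q_u)_{u ∈ A}` a linearly independent family of
commuting idempotents in a `K`-algebra `E` with `q_u q_v = q_{u ⊓ v}`. Then the elements
`q_v* := ∑_{u ≤ v} μ(u,v) q_u` are pairwise orthogonal nonzero idempotents with
`∑_{u ≤ v} q_u* = q_v` for all `v`; in particular if `A` has a top element `⊤` then
`∑_{u ∈ A} q_u* = q_⊤`. -/
theorem qStar_orthogonal_idempotents
    {K : Type*} [Field K] {E : Type*} [Ring E] [Algebra K E]
    {A : Type*} [Lattice A] [Fintype A] [DecidableEq A]
    [DecidableRel ((· ≤ ·) : A → A → Prop)]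
    (q : A → E)
    (hq : ∀ u v : A, q u * q v = q (u ⊓ v))
    (hind : LinearIndependent K q)
    (μ : A → A → ℤ)
    (hrefl : ∀ u : A, μ u u = 1)
    (hzero : ∀ u w : A, ¬ u ≤ w → μ u w = 0)
    (hrec : ∀ u w : A, u < w →
      (∑ v ∈ Finset.univ.filter (fun v => u ≤ v ∧ v ≤ w), μ v w) = 0) :
    (∀ u : A, (∑ w ∈ Finset.univ.filter (· ≤ u), ((μ w u : ℤ) : K) • q w) *
        (∑ w ∈ Finset.univ.filter (· ≤ u), ((μ w u : ℤ) : K) • q w) =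
        (∑ w ∈ Finset.univ.filter (· ≤ u), ((μ w u : ℤ) : K) • q w)) ∧
    (∀ u v : A, u ≠ v →
      (∑ w ∈ Finset.univ.filter (· ≤ u), ((μ w u : ℤ) : K) • q w) *
        (∑ w ∈ Finset.univ.filter (· ≤ v), ((μ w v : ℤ) : K) • q w) = 0) ∧
    (∀ u : A, (∑ w ∈ Finset.univ.filter (· ≤ u), ((μ w u : ℤ) : K) • q w) ≠ 0) ∧
    (∀ v : A, (∑ u ∈ Finset.univ.filter (· ≤ v),
        ∑ w ∈ Finset.univ.filter (· ≤ u), ((μ w u : ℤ) : K) • q w) = q v) ∧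
    (∀ m : A, IsTop m →
      (∑ u : A, ∑ w ∈ Finset.univ.filter (· ≤ u), ((μ w u : ℤ) : K) • q w) = q m) :=
  qStar_orthogonal_idempotents_general q hq hind μ hrefl hzero hrec
end
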